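/- Main theorem: for sub-σ-algebras 𝒢 ⊆ ℋ ⊆ 𝒜, the σ-algebra 𝒢 is sufficient for ℋ with respect to A₁ under P (P[A₁ | 𝒢] = P[A₁ | ℋ] P-a.s.) if and only if C*_A(P, ℋ) ⊆ C*_A(P, 𝒢). -/

import Mathlib

open MeasureTheory Set

/-- `Ψ` is an `m`-measurable version of the conditional probability of `A` given `m` under `P`
(a measure on the ambient σ-algebra `mΩ`): for every `m`-measurable `H`,
`P (A ∩ H) = ∫_H Ψ dP`. -/
def IsCondVersion {Ω : Type*} [mΩ : MeasurableSpace Ω] (m : MeasurableSpace Ω)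
    (P : @Measure Ω mΩ) (A : Set Ω) (Ψ : Ω → ℝ) : Prop :=
  Measurable[m] Ψ ∧
  ∀ H : Set Ω, MeasurableSet[m] H → (P (A ∩ H)).toReal = ∫ ω in H, Ψ ω ∂P

/-- `P` and `Q` are related by covariate shift w.r.t. the sub-σ-algebra `m`: there is a common
`m`-measurable `[0,1]`-valued version `Ψ` of the conditional probability of `A` given `m`. -/
def CovShift {Ω : Type*} [mΩ : MeasurableSpace Ω] (m : MeasurableSpace Ω)
    (P Q : @Measure Ω mΩ) (A : Set Ω) : Prop :=
  ∃ Ψ : Ω → ℝ, (∀ ω, Ψ ω ∈ Set.Icc (0 : ℝ) 1) ∧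
    @IsCondVersion Ω mΩ m P A Ψ ∧ @IsCondVersion Ω mΩ m Q A Ψ

/-- `Q` is absolutely continuous w.r.t. `P` on the sub-σ-algebra `m`. -/
def AbsContOn {Ω : Type*} [mΩ : MeasurableSpace Ω] (m : MeasurableSpace Ω)
    (P Q : @Measure Ω mΩ) : Prop :=
  ∀ N : Set Ω, MeasurableSet[m] N → P N = 0 → Q N = 0

/-- `C*_A(P, m)`: the probability measures `Q` absolutely continuous w.r.t. `P` on `m` that are
related to `P` by covariate shift w.r.t. `m`. -/
def CAstar {Ω : Type*} [mΩ : MeasurableSpace Ω] (m : MeasurableSpace Ω)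
    (P : @Measure Ω mΩ) (A : Set Ω) : Set (@Measure Ω mΩ) :=
  {Q | @IsProbabilityMeasure Ω mΩ Q ∧ @AbsContOn Ω mΩ m P Q ∧ @CovShift Ω mΩ m P Q A}

/-! A `[0, 1]`-valued version of `P[A | ℋ]` is unique `P`-a.e., and since two such versions are
`ℋ`-measurable, their a.e. equality passes to every `Q` absolutely continuous w.r.t. `P` on `ℋ`;
this gives `⇒`.

For `⇐`, let `Ψ` and `Θ` be `[0, 1]`-valued versions of `P[A | ℋ]` and `P[A | 𝒢]` and tilt `P`
by the `ℋ`-measurable density `1 + Ψ - Θ`. By the pull-out property the tilted measure `Q` still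
has `Ψ` as a version of `Q[A | ℋ]`, so `Q ∈ C*_A(P, ℋ) ⊆ C*_A(P, 𝒢)` and `Θ` is also a version of
`Q[A | 𝒢]`. Computing `Q[A]` with `Ψ` and with `Θ` gives `∫ (1 + Ψ - Θ) (Ψ - Θ) dP = 0`; as
`∫ (Ψ - Θ) dP = P[A] - P[A] = 0`, this is `∫ (Ψ - Θ)² dP = 0`, so `Ψ = Θ` a.e. and `Θ` is a
version of `P[A | ℋ]`. -/

open scoped NNReal

variable {Ω : Type*} {m G H mΩ : MeasurableSpace Ω} {P Q : Measure Ω}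
  {A : Set Ω} {Ψ Φ : Ω → ℝ}

lemma measureReal_inter_eq_setIntegral_indicator_one (hA : MeasurableSet A) (B : Set Ω) :
    (P (A ∩ B)).toReal = ∫ ω in B, A.indicator 1 ω ∂P := by
  rw [integral_indicator_one hA, measureReal_def, Measure.restrict_apply hA]

namespace IsCondVersion

lemma integral_eq (hΨ : IsCondVersion m P A Ψ) : ∫ ω, Ψ ω ∂P = (P A).toReal := by
  simpa using (hΨ.2 univ MeasurableSet.univ).symm

lemma integrable (hm : m ≤ mΩ) [IsFiniteMeasure P] (hΨ : IsCondVersion m P A Ψ)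
    (h01 : ∀ ω, Ψ ω ∈ Icc 0 1) : Integrable Ψ P :=
  .of_mem_Icc 0 1 (hΨ.1.mono hm le_rfl).aemeasurable (ae_of_all _ h01)

lemma ae_eq (hm : m ≤ mΩ) [IsFiniteMeasure P] (hΨ : IsCondVersion m P A Ψ)
    (hΦ : IsCondVersion m P A Φ) (hΨi : Integrable Ψ P) (hΦi : Integrable Φ P) :
    Ψ =ᵐ[P] Φ :=
  ae_eq_of_forall_setIntegral_eq_of_sigmaFinite' hm (fun _ _ _ => hΨi.integrableOn)
    (fun _ _ _ => hΦi.integrableOn) (fun B hB _ => (hΨ.2 B hB).symm.trans (hΦ.2 B hB))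
    hΨ.1.stronglyMeasurable.aestronglyMeasurable hΦ.1.stronglyMeasurable.aestronglyMeasurable

lemma ae_eq_condExp (hm : m ≤ mΩ) [IsFiniteMeasure P] (hA : MeasurableSet A)
    (hΨ : IsCondVersion m P A Ψ) (hΨi : Integrable Ψ P) : Ψ =ᵐ[P] P[A.indicator 1 | m] :=
  ae_eq_condExp_of_forall_setIntegral_eq hm ((integrable_const 1).indicator hA)
    (fun _ _ _ => hΨi.integrableOn)
    (fun B hB _ => by rw [← hΨ.2 B hB, measureReal_inter_eq_setIntegral_indicator_one hA])
    hΨ.1.stronglyMeasurable.aestronglyMeasurable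

lemma of_ae_eq (hΨ : IsCondVersion H P A Ψ) (hGH : G ≤ H) (hΦ : Measurable[G] Φ)
    (hae : Φ =ᵐ[P] Ψ) : IsCondVersion G P A Φ :=
  ⟨hΦ, fun B hB => (hΨ.2 B (hGH B hB)).trans (integral_congr_ae (ae_restrict_of_ae hae.symm))⟩

end IsCondVersion

lemma AbsContOn.ae_eq (h : AbsContOn m P Q) (hΨ : Measurable[m] Ψ) (hΦ : Measurable[m] Φ)
    (hae : Ψ =ᵐ[P] Φ) : Ψ =ᵐ[Q] Φ :=
  ae_iff.mpr (h _ (measurableSet_eq_fun hΨ hΦ).compl (ae_iff.mp hae))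

lemma isProbabilityMeasure_withDensity_coe {g : Ω → ℝ≥0}
    (hgi : Integrable (fun ω => (g ω : ℝ)) P) (hg : ∫ ω, (g ω : ℝ) ∂P = 1) :
    IsProbabilityMeasure (P.withDensity fun ω => g ω) :=
  ⟨by rw [withDensity_apply _ MeasurableSet.univ, Measure.restrict_univ,
    lintegral_coe_eq_integral _ hgi, hg, ENNReal.ofReal_one]⟩

lemma IsCondVersion.withDensity (hm : m ≤ mΩ) [IsFiniteMeasure P] (hA : MeasurableSet A)
    (hΨ : IsCondVersion m P A Ψ) (hΨi : Integrable Ψ P) {g : Ω → ℝ≥0} (hg : Measurable[m] g)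
    (hgi : Integrable (fun ω => (g ω : ℝ)) P) :
    IsCondVersion m (P.withDensity fun ω => g ω) A Ψ := by
  refine ⟨hΨ.1, fun B hB => ?_⟩
  have hgΩ : Measurable g := hg.mono hm le_rfl
  have hBΩ : MeasurableSet B := hm B hB
  have hind : Integrable (A.indicator (1 : Ω → ℝ)) P := (integrable_const 1).indicator hA
  have hgind : Integrable (fun ω => (g ω : ℝ) * A.indicator 1 ω) P :=
    hgi.mul_bdd (c := 1) hind.1 (ae_of_all _ fun ω => by by_cases h : ω ∈ A <;> simp [h])
  have hpull : P[fun ω => (g ω : ℝ) * A.indicator 1 ω | m]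
      =ᵐ[P] fun ω => (g ω : ℝ) * Ψ ω := by
    filter_upwards [condExp_mul_of_stronglyMeasurable_left
      hg.coe_nnreal_real.stronglyMeasurable hgind hind, hΨ.ae_eq_condExp hm hA hΨi] with ω h h'
    exact h.trans (by rw [Pi.mul_apply, h'])
  calc ((P.withDensity fun ω => g ω) (A ∩ B)).toReal
      = ∫ ω in B, A.indicator 1 ω ∂(P.withDensity fun ω => g ω) :=
        measureReal_inter_eq_setIntegral_indicator_one hA B
    _ = ∫ ω in B, (g ω : ℝ) * A.indicator 1 ω ∂P :=
        setIntegral_withDensity_eq_setIntegral_smul hgΩ _ hBΩ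
    _ = ∫ ω in B, (g ω : ℝ) * Ψ ω ∂P :=
        (setIntegral_condExp hm hgind hB).symm.trans (integral_congr_ae (ae_restrict_of_ae hpull))
    _ = ∫ ω in B, Ψ ω ∂(P.withDensity fun ω => g ω) :=
        (setIntegral_withDensity_eq_setIntegral_smul hgΩ _ hBΩ).symm

lemma exists_isCondVersion_mem_Icc (hm : m ≤ mΩ) [IsFiniteMeasure P] (hA : MeasurableSet A) :
    ∃ Ψ : Ω → ℝ, (∀ ω, Ψ ω ∈ Icc 0 1) ∧ IsCondVersion m P A Ψ := by
  have hind : Integrable (A.indicator (1 : Ω → ℝ)) P := (integrable_const 1).indicator hA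
  have hind01 : ∀ ω, A.indicator (1 : Ω → ℝ) ω ∈ Icc 0 1 := fun ω => by
    by_cases h : ω ∈ A <;> simp [h]
  set c := P[A.indicator (1 : Ω → ℝ) | m]
  have hc0 : 0 ≤ᵐ[P] c := condExp_nonneg (ae_of_all _ fun ω => (hind01 ω).1)
  have hc1 : c ≤ᵐ[P] fun _ => 1 := by
    simpa [condExp_const hm] using
      condExp_mono (m := m) hind (integrable_const 1) (ae_of_all _ fun ω => (hind01 ω).2)
  refine ⟨fun ω => max 0 (min 1 (c ω)),
    fun ω => ⟨le_max_left _ _, max_le zero_le_one (min_le_left _ _)⟩,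
    measurable_const.max (measurable_const.min stronglyMeasurable_condExp.measurable),
    fun B hB => ?_⟩
  rw [measureReal_inter_eq_setIntegral_indicator_one hA, ← setIntegral_condExp hm hind hB]
  refine integral_congr_ae (ae_restrict_of_ae ?_)
  filter_upwards [hc0, hc1] with ω h0 h1
  rw [min_eq_right h1, max_eq_right (show (0 : ℝ) ≤ c ω from h0)]

lemma ae_eq_of_integral_eq_of_integral_one_add_sub_mul_eq [IsFiniteMeasure P] {Θ : Ω → ℝ}
    (hΨ : Measurable Ψ) (hΘ : Measurable Θ) (hΨ01 : ∀ ω, Ψ ω ∈ Icc 0 1)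
    (hΘ01 : ∀ ω, Θ ω ∈ Icc 0 1) (h₀ : ∫ ω, Ψ ω ∂P = ∫ ω, Θ ω ∂P)
    (h₁ : ∫ ω, (1 + Ψ ω - Θ ω) * Ψ ω ∂P = ∫ ω, (1 + Ψ ω - Θ ω) * Θ ω ∂P) :
    Ψ =ᵐ[P] Θ := by
  have hbdd {f : Ω → ℝ} (hf : Measurable f) (hb : ∀ ω, f ω ∈ Icc (-2) 2) : Integrable f P :=
    .of_mem_Icc (-2) 2 hf.aemeasurable (ae_of_all _ hb)
  have hΨi := hbdd hΨ fun ω => ⟨by linarith [(hΨ01 ω).1], by linarith [(hΨ01 ω).2]⟩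
  have hΘi := hbdd hΘ fun ω => ⟨by linarith [(hΘ01 ω).1], by linarith [(hΘ01 ω).2]⟩
  have hprod {f : Ω → ℝ} (hf : Measurable f) (hf01 : ∀ ω, f ω ∈ Icc 0 1) :
      Integrable (fun ω => (1 + Ψ ω - Θ ω) * f ω) P :=
    hbdd (by fun_prop) fun ω => by
      obtain ⟨_, _⟩ := hΨ01 ω; obtain ⟨_, _⟩ := hΘ01 ω; obtain ⟨_, _⟩ := hf01 ω
      constructor <;> nlinarith
  have hsq : ∫ ω, (Ψ ω - Θ ω) ^ 2 ∂P = 0 := by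
    calc ∫ ω, (Ψ ω - Θ ω) ^ 2 ∂P
        = ∫ ω, ((1 + Ψ ω - Θ ω) * Ψ ω - (1 + Ψ ω - Θ ω) * Θ ω) - (Ψ ω - Θ ω) ∂P :=
          integral_congr_ae (ae_of_all _ fun ω => by ring)
      _ = 0 := by
          have hdiff : Integrable (fun ω => (1 + Ψ ω - Θ ω) * Ψ ω - (1 + Ψ ω - Θ ω) * Θ ω) P :=
            (hprod hΨ hΨ01).sub (hprod hΘ hΘ01)
          have hD : Integrable (fun ω => Ψ ω - Θ ω) P := hΨi.sub hΘi
          rw [integral_sub hdiff hD,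
            integral_sub (hprod hΨ hΨ01) (hprod hΘ hΘ01), integral_sub hΨi hΘi, h₀, h₁]
          ring
  have hsqi : Integrable (fun ω => (Ψ ω - Θ ω) ^ 2) P :=
    hbdd (by fun_prop) fun ω => by
      obtain ⟨_, _⟩ := hΨ01 ω; obtain ⟨_, _⟩ := hΘ01 ω
      constructor <;> nlinarith
  filter_upwards [(integral_eq_zero_iff_of_nonneg (fun ω => sq_nonneg _) hsqi).mp hsq]
    with ω hω
  exact sub_eq_zero.mp (pow_eq_zero_iff two_ne_zero |>.mp hω)

lemma cAstar_subset_cAstar_of_isCondVersion (hGH : G ≤ H) (hH : H ≤ mΩ) [IsFiniteMeasure P]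
    (h01 : ∀ ω, Ψ ω ∈ Icc 0 1) (hΨG : IsCondVersion G P A Ψ) (hΨH : IsCondVersion H P A Ψ) :
    CAstar H P A ⊆ CAstar G P A := by
  rintro Q ⟨hQ, hQP, Φ, hΦ01, hΦP, hΦQ⟩
  have hΦΨ : Φ =ᵐ[Q] Ψ := hQP.ae_eq hΦP.1 hΨH.1 <|
    hΦP.ae_eq hH hΨH (hΦP.integrable hH hΦ01) (hΨH.integrable hH h01)
  exact ⟨hQ, fun N hN => hQP N (hGH N hN), Ψ, h01, hΨG, hΦQ.of_ae_eq hGH hΨG.1 hΦΨ.symm⟩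

lemma exists_isCondVersion_of_cAstar_subset_cAstar (hGH : G ≤ H) (hH : H ≤ mΩ)
    [IsProbabilityMeasure P] (hA : MeasurableSet A) (hsub : CAstar H P A ⊆ CAstar G P A) :
    ∃ Ψ : Ω → ℝ, (∀ ω, Ψ ω ∈ Icc 0 1) ∧ IsCondVersion G P A Ψ ∧ IsCondVersion H P A Ψ := by
  have hG : G ≤ mΩ := hGH.trans hH
  obtain ⟨Ψ, hΨ01, hΨ⟩ := exists_isCondVersion_mem_Icc (P := P) hH hA
  obtain ⟨Θ, hΘ01, hΘ⟩ := exists_isCondVersion_mem_Icc (P := P) hG hA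
  have hΨi : Integrable Ψ P := hΨ.integrable hH hΨ01
  have hΘi : Integrable Θ P := hΘ.integrable hG hΘ01
  let g : Ω → ℝ≥0 := fun ω => ⟨1 + Ψ ω - Θ ω, by linarith [(hΨ01 ω).1, (hΘ01 ω).2]⟩
  have hg : Measurable[H] g :=
    Measurable.subtype_mk (f := fun ω => 1 + Ψ ω - Θ ω)
      ((measurable_const.add hΨ.1).sub (hΘ.1.mono hGH le_rfl))
  have h1Ψi : Integrable (fun ω => 1 + Ψ ω) P := (integrable_const 1).add hΨi
  have hgi : Integrable (fun ω => (g ω : ℝ)) P := h1Ψi.sub hΘi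
  let Q := P.withDensity fun ω => g ω
  have hΨQ : IsCondVersion H Q A Ψ := hΨ.withDensity hH hA hΨi hg hgi
  have hgP : ∫ ω, (g ω : ℝ) ∂P = 1 := by
    change ∫ ω, (1 + Ψ ω - Θ ω) ∂P = 1
    rw [integral_sub h1Ψi hΘi, integral_add (integrable_const 1) hΨi,
      hΨ.integral_eq, hΘ.integral_eq]
    simp
  have hQ : Q ∈ CAstar H P A :=
    ⟨isProbabilityMeasure_withDensity_coe hgi hgP,
      fun N _ hN => withDensity_absolutelyContinuous P _ hN, Ψ, hΨ01, hΨ, hΨQ⟩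
  obtain ⟨-, -, Φ, hΦ01, hΦP, hΦQ⟩ := hsub hQ
  have hΦΘ : Φ =ᵐ[Q] Θ := (withDensity_absolutelyContinuous P _).ae_eq <|
    hΦP.ae_eq hG hΘ (hΦP.integrable hG hΦ01) hΘi
  have hQΨΘ : ∫ ω, Ψ ω ∂Q = ∫ ω, Θ ω ∂Q := by
    rw [hΨQ.integral_eq, ← hΦQ.integral_eq, integral_congr_ae hΦΘ]
  have hΨΘ : Ψ =ᵐ[P] Θ := by
    refine ae_eq_of_integral_eq_of_integral_one_add_sub_mul_eq (hΨ.1.mono hH le_rfl)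
      (hΘ.1.mono hG le_rfl) hΨ01 hΘ01 (by rw [hΨ.integral_eq, hΘ.integral_eq]) ?_
    have hdens (f : Ω → ℝ) : ∫ ω, f ω ∂Q = ∫ ω, (1 + Ψ ω - Θ ω) * f ω ∂P :=
      integral_withDensity_eq_integral_smul (hg.mono hH le_rfl) f
    rwa [hdens, hdens] at hQΨΘ
  exact ⟨Θ, hΘ01, hΘ, hΨ.of_ae_eq le_rfl (hΘ.1.mono hGH le_rfl) hΨΘ.symm⟩

theorem stmt11_general {Ω : Type} [mΩ : MeasurableSpace Ω]
    {G H : MeasurableSpace Ω} (hGH : G ≤ H) (hH : H ≤ mΩ)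
    (A₁ : Set Ω) (hA₁ : MeasurableSet[mΩ] A₁)
    (P : @Measure Ω mΩ) (hP : @IsProbabilityMeasure Ω mΩ P) :
    (∃ Ψ : Ω → ℝ, (∀ ω, Ψ ω ∈ Set.Icc (0 : ℝ) 1) ∧
        @IsCondVersion Ω mΩ G P A₁ Ψ ∧ @IsCondVersion Ω mΩ H P A₁ Ψ) ↔
      @CAstar Ω mΩ H P A₁ ⊆ @CAstar Ω mΩ G P A₁ :=
  ⟨fun ⟨_, h01, hΨG, hΨH⟩ => cAstar_subset_cAstar_of_isCondVersion hGH hH h01 hΨG hΨH,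
    exists_isCondVersion_of_cAstar_subset_cAstar hGH hH hA₁⟩

/-- Main theorem: for `𝒢 ⊆ ℋ ⊆ 𝒜`, the σ-algebra `𝒢` is sufficient for `ℋ` w.r.t. `A₁`
under `P` (a common `[0,1]`-valued `𝒢`-measurable version of both `P[A₁ | 𝒢]` and
`P[A₁ | ℋ]` exists) if and only if `C*_A(P, ℋ) ⊆ C*_A(P, 𝒢)`. -/
theorem stmt11 {Ω : Type} [mΩ : MeasurableSpace Ω]
    {G H : MeasurableSpace Ω} (hGH : G ≤ H) (hH : H ≤ mΩ)
    (A₁ : Set Ω) (hA₁ : MeasurableSet[mΩ] A₁)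
    (P : @Measure Ω mΩ) (hP : @IsProbabilityMeasure Ω mΩ P)
    (hpos : 0 < P A₁) (hlt : P A₁ < 1) :
    (∃ Ψ : Ω → ℝ, (∀ ω, Ψ ω ∈ Set.Icc (0 : ℝ) 1) ∧
        @IsCondVersion Ω mΩ G P A₁ Ψ ∧ @IsCondVersion Ω mΩ H P A₁ Ψ) ↔
      @CAstar Ω mΩ H P A₁ ⊆ @CAstar Ω mΩ G P A₁ :=
  stmt11_general (mΩ := mΩ) hGH hH A₁ hA₁ P hP
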